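/- arXiv:2203.06352 — 2 statements merged into one kernel-verified Lean document; each statement's English description precedes it below -/
import Mathlib

section
/- Let M, N ∈ ℕ and let φ : ℚ_p → ℂ be a function supported in p^{-N}ℤ_p and constant on each coset of p^{M}ℤ_p. If φ satisfies the refinement equation φ(x) = p Σ_{h ∈ H₀} β_h φ(x/p − h) (with (β_h) ∈ ℓ², the series converging in L²(ℚ_p)), then in fact φ(x) = p Σ_{h ∈ H₀^{(N+1)}} β_h φ(x/p − h); indeed, for every h ∈ H₀ \ H₀^{(N+1)} and every x ∈ ℚ_p one has φ(x/p − h)·1_{p^{-N}ℤ_p}(x) = 0 and the tail sum Σ_{h ∉ H₀^{(N+1)}} β_h φ(x/p − h) vanishes identically. -/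
/-!
An element `h ∈ H₀` lies in `H₀^{(N+1)}` exactly when `‖h‖ ≤ p^{N+1}`. If `φ(x/p - h) ≠ 0` then
`‖x/p - h‖ ≤ p^N`, so by the ultrametric inequality `‖x/p‖` and `‖h‖` are either both at most
`p^{N+1}` or both larger: `h ∈ H₀^{(N+1)}` iff `‖x‖ ≤ p^N`. Hence on the support of `φ` only the
terms with `h ∈ H₀^{(N+1)}` survive, while off the support only the tail terms do, so there the
tail sum is the whole series, which equals `φ(x)/p = 0`.
-/

open MeasureTheory Real Complex

/-- `H₀ = {k p^{-s} : s ∈ ℕ, 0 ≤ k ≤ p^s - 1} ⊆ ℚ_p`, a complete set of representatives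
of `ℚ_p/ℤ_p`. -/
def H0 (p : ℕ) [Fact p.Prime] : Set ℚ_[p] :=
  {x | ∃ s k : ℕ, k < p ^ s ∧ x = (k : ℚ_[p]) / (p : ℚ_[p]) ^ s}

/-- `H₀^{(s)} = {k p^{-s} : 0 ≤ k ≤ p^s - 1} ⊆ H₀`. -/
def H0s (p : ℕ) [Fact p.Prime] (s : ℕ) : Set ℚ_[p] :=
  {x | ∃ k : ℕ, k < p ^ s ∧ x = (k : ℚ_[p]) / (p : ℚ_[p]) ^ s}

theorem tsum_subtype_eq_of_subset {α β : Type*} [AddCommMonoid α] [TopologicalSpace α]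
    {f : β → α} {s t : Set β} (hst : s ⊆ t) (hf : ∀ x ∈ t \ s, f x = 0) :
    ∑' x : t, f x = ∑' x : s, f x := by
  rw [tsum_subtype, tsum_subtype]
  congr 1
  ext x
  by_cases hs : x ∈ s
  · simp [hs, hst hs]
  · by_cases ht : x ∈ t
    · simp [hs, ht, hf x ⟨ht, hs⟩]
    · simp [hs, ht]

theorem IsUltrametricDist.norm_le_iff_of_norm_sub_le {E : Type*} [SeminormedAddCommGroup E]
    [IsUltrametricDist E] {a b : E} {r : ℝ} (hab : ‖a - b‖ ≤ r) : ‖a‖ ≤ r ↔ ‖b‖ ≤ r := by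
  constructor <;> intro h
  · simpa using (norm_add_le_max a (-(a - b))).trans (max_le h (by rwa [norm_neg]))
  · simpa using (norm_add_le_max (a - b) b).trans (max_le hab h)

section H0

variable {p : ℕ} [Fact p.Prime]

theorem Padic.norm_div_p_le_iff (x : ℚ_[p]) (n : ℤ) :
    ‖x / p‖ ≤ (p : ℝ) ^ (n + 1) ↔ ‖x‖ ≤ (p : ℝ) ^ n := by
  have hp : (0 : ℝ) < p := by exact_mod_cast (Fact.out : p.Prime).pos
  rw [norm_div, Padic.norm_p, div_inv_eq_mul, zpow_add_one₀ hp.ne', mul_le_mul_iff_left₀ hp]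

theorem H0s_subset_H0 (s : ℕ) : H0s p s ⊆ H0 p := by
  rintro x ⟨k, hk, rfl⟩
  exact ⟨s, k, hk, rfl⟩

theorem norm_le_of_mem_H0s {s : ℕ} {h : ℚ_[p]} (hh : h ∈ H0s p s) : ‖h‖ ≤ (p : ℝ) ^ (s : ℤ) := by
  obtain ⟨k, -, rfl⟩ := hh
  have hp : (0 : ℝ) < p := by exact_mod_cast (Fact.out : p.Prime).pos
  rw [norm_div, Padic.norm_p_pow, div_le_iff₀ (by positivity), ← zpow_add₀ hp.ne', add_neg_cancel,
    zpow_zero]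
  exact_mod_cast Padic.norm_int_le_one k

theorem H0s_mono {s t : ℕ} (hst : s ≤ t) : H0s p s ⊆ H0s p t := by
  rintro x ⟨k, hk, rfl⟩
  have hsplit : p ^ t = p ^ s * p ^ (t - s) := by rw [← pow_add, Nat.add_sub_cancel' hst]
  refine ⟨k * p ^ (t - s), ?_, ?_⟩
  · rw [hsplit]
    exact Nat.mul_lt_mul_of_pos_right hk (Nat.pow_pos (Fact.out : p.Prime).pos)
  · have hp : (p : ℚ_[p]) ≠ 0 := by exact_mod_cast (Fact.out : p.Prime).ne_zero
    rw [div_eq_div_iff (pow_ne_zero _ hp) (pow_ne_zero _ hp)]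
    push_cast
    rw [mul_assoc, ← pow_add, Nat.sub_add_cancel hst]

theorem mem_H0s_of_norm_le {s : ℕ} {h : ℚ_[p]} (hh : h ∈ H0 p) (hn : ‖h‖ ≤ (p : ℝ) ^ (s : ℤ)) :
    h ∈ H0s p s := by
  obtain ⟨t, k, hk, rfl⟩ := hh
  rcases le_or_gt t s with hts | hst
  · exact H0s_mono hts ⟨k, hk, rfl⟩
  have hp : (0 : ℝ) < p := by exact_mod_cast (Fact.out : p.Prime).pos
  have hpQ : (p : ℚ_[p]) ≠ 0 := by exact_mod_cast (Fact.out : p.Prime).ne_zero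
  have hsplit : p ^ t = p ^ (t - s) * p ^ s := by rw [← pow_add, Nat.sub_add_cancel hst.le]
  -- `‖k / p^t‖ ≤ p^s` says that `p^(t-s)` divides `k`.
  obtain ⟨k', rfl⟩ : p ^ (t - s) ∣ k := by
    rw [← Int.natCast_dvd_natCast, Nat.cast_pow, ← Padic.norm_int_le_pow_iff_dvd]
    rw [norm_div, Padic.norm_p_pow, div_le_iff₀ (by positivity), ← zpow_add₀ hp.ne'] at hn
    rwa [Int.cast_natCast, Nat.cast_sub hst.le, neg_sub, sub_eq_neg_add, add_comm]
  refine ⟨k', ?_, ?_⟩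
  · rw [hsplit] at hk
    exact Nat.lt_of_mul_lt_mul_left hk
  · rw [div_eq_div_iff (pow_ne_zero _ hpQ) (pow_ne_zero _ hpQ)]
    push_cast
    rw [mul_comm ((p : ℚ_[p]) ^ (t - s)), mul_assoc, ← pow_add, Nat.sub_add_cancel hst.le]

theorem mem_H0s_iff_norm_le {s : ℕ} {h : ℚ_[p]} (hh : h ∈ H0 p) :
    h ∈ H0s p s ↔ ‖h‖ ≤ (p : ℝ) ^ (s : ℤ) :=
  ⟨norm_le_of_mem_H0s, mem_H0s_of_norm_le hh⟩

theorem mem_H0s_iff_of_apply_div_sub_ne_zero {E : Type*} [Zero E]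
    {φ : ℚ_[p] → E} {N : ℕ} (hsupp : ∀ x : ℚ_[p], φ x ≠ 0 → ‖x‖ ≤ (p : ℝ) ^ (N : ℤ))
    {x h : ℚ_[p]} (hh : h ∈ H0 p) (hφ : φ (x / p - h) ≠ 0) :
    h ∈ H0s p (N + 1) ↔ ‖x‖ ≤ (p : ℝ) ^ (N : ℤ) := by
  have hp : (1 : ℝ) ≤ p := by exact_mod_cast (Fact.out : p.Prime).one_le
  have hclose : ‖x / p - h‖ ≤ (p : ℝ) ^ ((N : ℤ) + 1) :=
    (hsupp _ hφ).trans (zpow_le_zpow_right₀ hp (Int.le_add_one le_rfl))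
  rw [mem_H0s_iff_norm_le hh, Nat.cast_add_one, ← Padic.norm_div_p_le_iff x]
  exact (IsUltrametricDist.norm_le_iff_of_norm_sub_le hclose).symm

end H0

theorem stmt6_general (p : ℕ) [Fact p.Prime] (N : ℕ)
    (φ : ℚ_[p] → ℂ)
    (hsupp : ∀ x : ℚ_[p], φ x ≠ 0 → ‖x‖ ≤ (p : ℝ) ^ (N : ℤ))
    (β : ℚ_[p] → ℂ)
    (href : ∀ x : ℚ_[p],
      φ x = p * ∑' h : H0 p, β (h : ℚ_[p]) * φ (x / (p : ℚ_[p]) - (h : ℚ_[p]))) :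
    (∀ x : ℚ_[p],
      φ x = p * ∑' h : H0s p (N + 1), β (h : ℚ_[p]) * φ (x / (p : ℚ_[p]) - (h : ℚ_[p]))) ∧
    (∀ h ∈ H0 p \ H0s p (N + 1), ∀ x : ℚ_[p],
      φ (x / (p : ℚ_[p]) - h) *
        Set.indicator {y : ℚ_[p] | ‖y‖ ≤ (p : ℝ) ^ (N : ℤ)} (fun _ => (1 : ℂ)) x = 0) ∧
    (∀ x : ℚ_[p],
      ∑' h : ↥(H0 p \ H0s p (N + 1)),
        β (h : ℚ_[p]) * φ (x / (p : ℚ_[p]) - (h : ℚ_[p])) = 0) := by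
  have tail_eq_zero : ∀ x : ℚ_[p], ‖x‖ ≤ (p : ℝ) ^ (N : ℤ) →
      ∀ h ∈ H0 p \ H0s p (N + 1), φ (x / p - h) = 0 := fun x hx h ⟨hh, hhs⟩ => by
    by_contra hφ
    exact hhs ((mem_H0s_iff_of_apply_div_sub_ne_zero hsupp hh hφ).2 hx)
  have head_eq_zero : ∀ x : ℚ_[p], ¬ ‖x‖ ≤ (p : ℝ) ^ (N : ℤ) →
      ∀ h ∈ H0s p (N + 1), φ (x / p - h) = 0 := fun x hx h hh => by
    by_contra hφ
    exact hx ((mem_H0s_iff_of_apply_div_sub_ne_zero hsupp (H0s_subset_H0 _ hh) hφ).1 hh)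
  have apply_eq_zero : ∀ x : ℚ_[p], ¬ ‖x‖ ≤ (p : ℝ) ^ (N : ℤ) → φ x = 0 :=
    fun x hx => by_contra fun h => hx (hsupp x h)
  refine ⟨fun x => ?_, fun h hh x => ?_, fun x => ?_⟩
  · by_cases hx : ‖x‖ ≤ (p : ℝ) ^ (N : ℤ)
    · rw [href x, tsum_subtype_eq_of_subset (f := fun y => β y * φ (x / p - y)) (H0s_subset_H0 _)
        fun h hh => by rw [tail_eq_zero x hx h hh, mul_zero]]
    · rw [apply_eq_zero x hx, tsum_congr fun h => by rw [head_eq_zero x hx h h.2, mul_zero], tsum_zero,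
        mul_zero]
  · by_cases hx : x ∈ {y : ℚ_[p] | ‖y‖ ≤ (p : ℝ) ^ (N : ℤ)}
    · rw [tail_eq_zero x hx h hh, zero_mul]
    · rw [Set.indicator_of_notMem hx, mul_zero]
  · by_cases hx : ‖x‖ ≤ (p : ℝ) ^ (N : ℤ)
    · rw [tsum_congr fun h => by rw [tail_eq_zero x hx h h.2, mul_zero], tsum_zero]
    · have hp : (p : ℂ) ≠ 0 := by exact_mod_cast (Fact.out : p.Prime).ne_zero
      rw [← tsum_subtype_eq_of_subset (f := fun y => β y * φ (x / p - y)) Set.sdiff_subset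
        fun h ⟨hh, hhs⟩ => by
          rw [head_eq_zero x hx h (not_not.1 fun h' => hhs ⟨hh, h'⟩), mul_zero]]
      exact (mul_eq_zero.1 ((href x).symm.trans (apply_eq_zero x hx))).resolve_left hp

/-- Let `p` be prime, `M, N ∈ ℕ`, and let `φ : ℚ_p → ℂ` be supported in
`p^{-N}ℤ_p` and constant on each coset of `p^Mℤ_p`.  If `φ` satisfies the refinement
equation `φ(x) = p ∑_{h ∈ H₀} β_h φ(x/p - h)` with `(β_h) ∈ ℓ²`, then in fact
`φ(x) = p ∑_{h ∈ H₀^{(N+1)}} β_h φ(x/p - h)`; indeed for every `h ∈ H₀ \ H₀^{(N+1)}` and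
every `x` one has `φ(x/p - h)·1_{p^{-N}ℤ_p}(x) = 0`, and the tail sum
`∑_{h ∉ H₀^{(N+1)}} β_h φ(x/p - h)` vanishes identically. -/
theorem stmt6 (p : ℕ) [Fact p.Prime] (M N : ℕ)
    (φ : ℚ_[p] → ℂ)
    (hsupp : ∀ x : ℚ_[p], φ x ≠ 0 → ‖x‖ ≤ (p : ℝ) ^ (N : ℤ))
    (hconst : ∀ x y : ℚ_[p], ‖x - y‖ ≤ (p : ℝ) ^ (-(M : ℤ)) → φ x = φ y)
    (β : ℚ_[p] → ℂ)
    (hβ : Summable fun h : H0 p => ‖β (h : ℚ_[p])‖ ^ 2)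
    (href : ∀ x : ℚ_[p],
      φ x = p * ∑' h : H0 p, β (h : ℚ_[p]) * φ (x / (p : ℚ_[p]) - (h : ℚ_[p]))) :
    (∀ x : ℚ_[p],
      φ x = p * ∑' h : H0s p (N + 1), β (h : ℚ_[p]) * φ (x / (p : ℚ_[p]) - (h : ℚ_[p]))) ∧
    (∀ h ∈ H0 p \ H0s p (N + 1), ∀ x : ℚ_[p],
      φ (x / (p : ℚ_[p]) - h) *
        Set.indicator {y : ℚ_[p] | ‖y‖ ≤ (p : ℝ) ^ (N : ℤ)} (fun _ => (1 : ℂ)) x = 0) ∧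
    (∀ x : ℚ_[p],
      ∑' h : ↥(H0 p \ H0s p (N + 1)),
        β (h : ℚ_[p]) * φ (x / (p : ℚ_[p]) - (h : ℚ_[p])) = 0) :=
  stmt6_general p N φ hsupp β href
end

section
/- Let M, N ∈ ℕ, let φ ∈ L¹(ℚ_p) ∩ L²(ℚ_p), and let m₀ : ℚ_p → ℂ be a function with m₀(u) = 1 for all u ∈ p^{N}ℤ_p. Suppose the Fourier transform φ̂ satisfies the refinement relation φ̂(u) = m₀(u) · φ̂(p·u) for all u ∈ ℚ_p, φ̂ is constant on each coset of p^{N}ℤ_p, and φ̂(0) = 1. Then for every u ∈ p^{-(M+1)}ℤ_p one has the finite product formula φ̂(u) = Π_{k=0}^{N+M} m₀(p^{k} u). -/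
open MeasureTheory Real Complex

/-!
Iterating the refinement relation `n = N + M + 1` times gives
`φ̂(u) = (∏_{k<n} m₀(p^k u)) · φ̂(p^n u)`. Since `|p^n u|_p ≤ p^{-N}`, the point `p^n u` lies in
the coset `p^N ℤ_p` of `0`, so `φ̂(p^n u) = φ̂(0) = 1`.
-/

/-- The Fourier transform `f̂(u) = ∫ f(x) conj(e(u·x)) dμ(x)` of `f ∈ L¹(ℚ_p)`, with
respect to the Haar measure `μ` and the standard character `e`. -/
noncomputable def ftrans (p : ℕ) [Fact p.Prime] [MeasurableSpace ℚ_[p]]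
    (μ : Measure ℚ_[p]) (e : ℚ_[p] → ℂ) (f : ℚ_[p] → ℂ) (u : ℚ_[p]) : ℂ :=
  ∫ x, f x * (starRingEnd ℂ) (e (u * x)) ∂μ

theorem eq_prod_range_mul_of_forall_eq_mul {R S : Type*} [Monoid R] [CommMonoid S]
    {f m : R → S} {c : R} (h : ∀ u, f u = m u * f (c * u)) (u : R) (n : ℕ) :
    f u = (∏ k ∈ Finset.range n, m (c ^ k * u)) * f (c ^ n * u) := by
  induction n with
  | zero => simp
  | succ n ih =>
    rw [ih, h (c ^ n * u), Finset.prod_range_succ, ← mul_assoc, pow_succ', mul_assoc c]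

theorem Padic.norm_p_pow_mul_le {p : ℕ} [Fact p.Prime] {u : ℚ_[p]} {a : ℤ}
    (hu : ‖u‖ ≤ (p : ℝ) ^ a) (n : ℕ) :
    ‖(p : ℚ_[p]) ^ n * u‖ ≤ (p : ℝ) ^ (a - n) := by
  have hp : (0 : ℝ) < p := by exact_mod_cast (Fact.out : p.Prime).pos
  calc ‖(p : ℚ_[p]) ^ n * u‖ = (p : ℝ) ^ (-n : ℤ) * ‖u‖ := by
        rw [norm_mul, Padic.norm_p_pow]
    _ ≤ (p : ℝ) ^ (-n : ℤ) * (p : ℝ) ^ a := by gcongr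
    _ = (p : ℝ) ^ (a - n) := by rw [← zpow_add₀ hp.ne']; ring_nf

theorem stmt16_general (p : ℕ) [Fact p.Prime] [MeasurableSpace ℚ_[p]]
    (μ : Measure ℚ_[p])
    (e : ℚ_[p] → ℂ)
    (M N : ℕ) (φ : ℚ_[p] → ℂ)
    (m₀ : ℚ_[p] → ℂ)
    (hrefine : ∀ u : ℚ_[p],
      ftrans p μ e φ u = m₀ u * ftrans p μ e φ ((p : ℚ_[p]) * u))
    (hconst : ∀ u v : ℚ_[p], ‖u - v‖ ≤ (p : ℝ) ^ (-(N : ℤ)) →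
      ftrans p μ e φ u = ftrans p μ e φ v)
    (hzero : ftrans p μ e φ 0 = 1) :
    ∀ u : ℚ_[p], ‖u‖ ≤ (p : ℝ) ^ ((M : ℤ) + 1) →
      ftrans p μ e φ u = ∏ k ∈ Finset.range (N + M + 1), m₀ ((p : ℚ_[p]) ^ k * u) := by
  intro u hu
  have hsmall : ‖(p : ℚ_[p]) ^ (N + M + 1) * u - 0‖ ≤ (p : ℝ) ^ (-(N : ℤ)) := by
    rw [sub_zero]
    convert Padic.norm_p_pow_mul_le hu (N + M + 1) using 2
    push_cast
    ring
  rw [eq_prod_range_mul_of_forall_eq_mul hrefine u (N + M + 1), hconst _ 0 hsmall, hzero,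
    mul_one]

/-- Let `p` be prime, `μ` the Haar measure on `(ℚ_p, +)` with
`μ(ℤ_p) = 1`, `e` the standard additive character.  Let `M, N ∈ ℕ`,
`φ ∈ L¹(ℚ_p) ∩ L²(ℚ_p)`, and `m₀ : ℚ_p → ℂ` with `m₀ = 1` on `p^Nℤ_p`.  Suppose
`φ̂(u) = m₀(u)·φ̂(pu)` for all `u`, `φ̂` is constant on each coset of `p^Nℤ_p`, and
`φ̂(0) = 1`.  Then for every `u ∈ p^{-(M+1)}ℤ_p`,
`φ̂(u) = ∏_{k=0}^{N+M} m₀(p^k u)`. -/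
theorem stmt16 (p : ℕ) [Fact p.Prime] [MeasurableSpace ℚ_[p]] [BorelSpace ℚ_[p]]
    (μ : Measure ℚ_[p]) [μ.IsAddHaarMeasure]
    (hμ : μ {x : ℚ_[p] | ‖x‖ ≤ 1} = 1)
    (e : ℚ_[p] → ℂ) (he_cont : Continuous e)
    (he : ∀ (k : ℤ) (s : ℕ),
      e ((k : ℚ_[p]) / (p : ℚ_[p]) ^ s) =
        Complex.exp (2 * (Real.pi : ℂ) * Complex.I * (k : ℂ) / (p : ℂ) ^ s))
    (M N : ℕ) (φ : ℚ_[p] → ℂ) (hφ1 : Integrable φ μ) (hφ2 : MemLp φ 2 μ)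
    (m₀ : ℚ_[p] → ℂ)
    (hm₀ : ∀ u : ℚ_[p], ‖u‖ ≤ (p : ℝ) ^ (-(N : ℤ)) → m₀ u = 1)
    (hrefine : ∀ u : ℚ_[p],
      ftrans p μ e φ u = m₀ u * ftrans p μ e φ ((p : ℚ_[p]) * u))
    (hconst : ∀ u v : ℚ_[p], ‖u - v‖ ≤ (p : ℝ) ^ (-(N : ℤ)) →
      ftrans p μ e φ u = ftrans p μ e φ v)
    (hzero : ftrans p μ e φ 0 = 1) :
    ∀ u : ℚ_[p], ‖u‖ ≤ (p : ℝ) ^ ((M : ℤ) + 1) →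
      ftrans p μ e φ u = ∏ k ∈ Finset.range (N + M + 1), m₀ ((p : ℚ_[p]) ^ k * u) :=
  stmt16_general p μ e M N φ m₀ hrefine hconst hzero
end
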